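/- (Recursive expansion) Let π be a policy with σ-finite occupancy μ_γ^π, π̃ its Markovian projection, and p^{π̃}(s, ·) the state transition kernel under π̃. For any measurable σ with μ_γ^π(σ) < ∞ and any t ≥ 0: μ_γ^π(σ) = ∑_{k=0}^{t} γ^k ∫_S p_0(ds) p_k^{π̃}(s, σ) + γ^{t+1} ∫_S μ_γ^π(ds) p_{t+1}^{π̃}(s, σ), where p_k^{π̃} denotes the k-fold composition of p^{π̃} (p_0^{π̃}(s,σ) = 1(s ∈ σ)). -/

import Mathlib

/-!
State-action occupancy equivalence, finite case.

An MDP with finite state space `S` and action space `A`, initial distribution `p0`,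
transition kernel `p`, and discount factor `γ < 1`. A (possibly non-Markovian) policy
maps a finite history (the past state-action pairs) and the current state to a
distribution over actions. The occupancy `occ γ p0 p π s a` is
`E[∑ₜ γ^t 1(Sₜ = s, Aₜ = a)]`, computed by summing path probabilities over all
trajectory prefixes. The Markovian policy `π̃(a|s) = μ(s,a)/μ(s)` has the same
occupancy as `π`.
-/

open Finset
open scoped ENNReal

/-- The history (of past state-action pairs) seen at step `i` of a trajectory
prefix `w`. -/
def hist {S A : Type*} {t : ℕ} (w : Fin (t + 1) → S × A) (i : Fin (t + 1)) :
    Fin i.1 → S × A :=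
  fun j => w ⟨j.1, lt_trans j.2 i.2⟩

/-- Probability of a trajectory prefix `w = ((S₀,A₀),…,(Sₜ,Aₜ))` under initial
distribution `p0`, transition kernel `p` and history-dependent policy `π`. -/
noncomputable def pathProb {S A : Type*} [Fintype S] [Fintype A]
    (p0 : S → ℝ≥0∞) (p : S × A → S → ℝ≥0∞)
    (π : (t : ℕ) → (Fin t → S × A) → S → A → ℝ≥0∞)
    (t : ℕ) (w : Fin (t + 1) → S × A) : ℝ≥0∞ :=
  p0 (w 0).1 * (∏ i : Fin (t + 1), π i.1 (hist w i) (w i).1 (w i).2) *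
    ∏ i : Fin t, p (w i.castSucc) (w i.succ).1

/-- Discounted occupancy `μ_γ^π(s,a) = E[∑ₜ γ^t 1(Sₜ = s, Aₜ = a)]`. -/
noncomputable def occ {S A : Type*} [Fintype S] [Fintype A] [DecidableEq S] [DecidableEq A]
    (γ : ℝ≥0∞) (p0 : S → ℝ≥0∞) (p : S × A → S → ℝ≥0∞)
    (π : (t : ℕ) → (Fin t → S × A) → S → A → ℝ≥0∞) (s : S) (a : A) : ℝ≥0∞ :=
  ∑' t : ℕ, γ ^ t * ∑ w : Fin (t + 1) → S × A,
    (if w (Fin.last t) = (s, a) then pathProb p0 p π t w else 0)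

/-- A Markovian policy, viewed as a history-dependent policy ignoring the history. -/
def liftMk {S A : Type*} (πm : S → A → ℝ≥0∞) :
    (t : ℕ) → (Fin t → S × A) → S → A → ℝ≥0∞ :=
  fun _ _ s a => πm s a


/-- `k`-fold composition of a transition matrix on `S`. -/
noncomputable def kpow {S : Type*} [Fintype S] [DecidableEq S]
    (P : S → S → ℝ≥0∞) : ℕ → S → S → ℝ≥0∞
  | 0 => fun s s' => if s = s' then 1 else 0
  | k + 1 => fun s s' => ∑ u, P s u * kpow P k u s'

section Aux
variable {S A : Type*} [Fintype S] [Fintype A] [DecidableEq S] [DecidableEq A]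
set_option linter.unusedSectionVars false

lemma hist_snoc_last (t : ℕ) (v : Fin (t+1) → S × A) (x : S × A) :
    hist (Fin.snoc v x : Fin (t+2) → S × A) (Fin.last (t+1)) = v := by
  funext j; have hj : j.1 < t + 1 := by simpa using j.2
  simp [hist, Fin.snoc, hj]

lemma hist_snoc_castSucc (t : ℕ) (v : Fin (t+1) → S × A) (x : S × A) (i : Fin (t+1)) :
    hist (Fin.snoc v x : Fin (t+2) → S × A) i.castSucc = hist v i := by
  funext j
  have hj : j.1 < t + 1 := by have := j.2; have := i.2; omega
  simp [hist, Fin.snoc, hj]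

lemma pathProb_snoc (p0 : S → ℝ≥0∞) (p : S × A → S → ℝ≥0∞)
    (π : (t : ℕ) → (Fin t → S × A) → S → A → ℝ≥0∞) (t : ℕ)
    (v : Fin (t+1) → S × A) (x : S × A) :
    pathProb p0 p π (t+1) (Fin.snoc v x) =
      pathProb p0 p π t v * (π (t+1) v x.1 x.2 * p (v (Fin.last t)) x.1) := by
  unfold pathProb
  rw [Fin.prod_univ_castSucc (f := fun i : Fin (t+2) =>
    π i.1 (hist (Fin.snoc v x) i) ((Fin.snoc v x : Fin (t+2) → S × A) i).1
      ((Fin.snoc v x : Fin (t+2) → S × A) i).2)]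
  rw [Fin.prod_univ_castSucc (f := fun i : Fin (t+1) =>
    p ((Fin.snoc v x : Fin (t+2) → S × A) i.castSucc)
      (((Fin.snoc v x : Fin (t+2) → S × A) i.succ)).1)]
  simp only [Fin.snoc_castSucc, Fin.snoc_last, Fin.succ_castSucc, Fin.succ_last,
    Fin.val_last, Fin.coe_castSucc, hist_snoc_last, hist_snoc_castSucc]
  have h0 : (Fin.snoc v x : Fin (t+2) → S × A) 0 = v 0 := by
    rw [show (0 : Fin (t+2)) = Fin.castSucc 0 by rfl, Fin.snoc_castSucc]
  rw [h0]; ring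

noncomputable def fpath (p0 : S → ℝ≥0∞) (p : S × A → S → ℝ≥0∞)
    (π : (t : ℕ) → (Fin t → S × A) → S → A → ℝ≥0∞) (t : ℕ) (s : S) (a : A) : ℝ≥0∞ :=
  ∑ w : Fin (t + 1) → S × A, (if w (Fin.last t) = (s, a) then pathProb p0 p π t w else 0)

def snocEquiv (n : ℕ) (X : Type*) : ((Fin n → X) × X) ≃ (Fin (n+1) → X) where
  toFun vx := Fin.snoc vx.1 vx.2
  invFun w := (Fin.init w, w (Fin.last n))
  left_inv vx := by simp
  right_inv w := by simp [Fin.snoc_init_self]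

variable (p0 : S → ℝ≥0∞) (p : S × A → S → ℝ≥0∞)
    (π : (t : ℕ) → (Fin t → S × A) → S → A → ℝ≥0∞)
    (hπ : ∀ t h s, ∑ a, π t h s a = 1)

include hπ in
lemma sum_fpath_zero (s : S) : ∑ a, fpath p0 p π 0 s a = p0 s := by
  have key : ∀ a, fpath p0 p π 0 s a
      = p0 s * π 0 (fun j => Fin.elim0 j) s a := by
    intro a
    unfold fpath
    rw [Finset.sum_eq_single (fun _ : Fin 1 => (s, a))]
    · rw [if_pos rfl]
      unfold pathProb
      have h1 : (∏ i : Fin 1, π i.1 (hist (fun _ : Fin 1 => (s,a)) i)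
          ((fun _ : Fin 1 => (s,a)) i).1 ((fun _ : Fin 1 => (s,a)) i).2)
          = π 0 (fun j => Fin.elim0 j) s a := by
        rw [Fin.prod_univ_one]
        congr 1
        funext j; exact j.elim0
      simp [h1]
      have h2 : hist (fun _ : Fin 1 => (s,a)) 0 = fun j : Fin 0 => j.elim0 :=
        funext fun j => j.elim0
      rw [h2]
    · intro w _ hw
      rw [if_neg]
      intro h; apply hw; funext j
      have hj : j = Fin.last 0 := Subsingleton.elim _ _
      rw [hj, h]
    · intro h; exact absurd (Finset.mem_univ _) h
  rw [Finset.sum_congr rfl (fun a _ => key a), ← Finset.mul_sum, hπ, mul_one]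

include hπ in
lemma sum_fpath_succ (t : ℕ) (s' : S) :
    ∑ a, fpath p0 p π (t+1) s' a = ∑ s, ∑ b, fpath p0 p π t s b * p (s, b) s' := by
  have step1 : ∀ a, fpath p0 p π (t+1) s' a
      = ∑ v : Fin (t+1) → S × A,
          pathProb p0 p π t v * (π (t+1) v s' a * p (v (Fin.last t)) s') := by
    intro a
    unfold fpath
    rw [← (snocEquiv (t+1) (S × A)).sum_comp]
    rw [Fintype.sum_prod_type]
    apply Finset.sum_congr rfl
    intro v _
    rw [Finset.sum_eq_single ((s', a) : S × A)]
    · rw [show (snocEquiv (t+1) (S × A)) (v, (s', a)) = Fin.snoc v (s', a) from rfl]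
      rw [if_pos (Fin.snoc_last _ _), pathProb_snoc]
    · intro x _ hx
      rw [if_neg]
      rw [show (snocEquiv (t+1) (S × A)) (v, x) = Fin.snoc v x from rfl, Fin.snoc_last]
      exact hx
    · intro h; exact absurd (Finset.mem_univ _) h
  calc ∑ a, fpath p0 p π (t+1) s' a
      = ∑ v : Fin (t+1) → S × A, ∑ a,
          pathProb p0 p π t v * (π (t+1) v s' a * p (v (Fin.last t)) s') := by
        rw [Finset.sum_congr rfl fun a _ => step1 a, Finset.sum_comm]
    _ = ∑ v : Fin (t+1) → S × A, pathProb p0 p π t v * p (v (Fin.last t)) s' := by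
        apply Finset.sum_congr rfl; intro v _
        rw [← Finset.mul_sum, ← Finset.sum_mul, hπ, one_mul]
    _ = ∑ v : Fin (t+1) → S × A, ∑ x : S × A,
          if v (Fin.last t) = x then pathProb p0 p π t v * p x s' else 0 := by
        apply Finset.sum_congr rfl; intro v _
        rw [Finset.sum_ite_eq]
        simp
    _ = ∑ x : S × A,
          (∑ v : Fin (t+1) → S × A, if v (Fin.last t) = x then pathProb p0 p π t v else 0)
            * p x s' := by
        rw [Finset.sum_comm]
        apply Finset.sum_congr rfl; intro x _
        rw [Finset.sum_mul]
        apply Finset.sum_congr rfl; intro v _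
        rw [ite_mul, zero_mul]
    _ = ∑ s, ∑ b, fpath p0 p π t s b * p (s, b) s' := by
        rw [Fintype.sum_prod_type]; rfl

lemma conserve_abstract (q0 : S → ℝ≥0∞) (q : S × A → S → ℝ≥0∞) (γ : ℝ≥0∞)
    (F : ℕ → S → A → ℝ≥0∞) (O : S → A → ℝ≥0∞)
    (hO : ∀ s a, O s a = ∑' t : ℕ, γ ^ t * F t s a)
    (h0 : ∀ s, ∑ a, F 0 s a = q0 s)
    (hsucc : ∀ t s', ∑ a, F (t+1) s' a = ∑ s, ∑ b, F t s b * q (s, b) s') (s' : S) :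
    ∑ b, O s' b = q0 s' + γ * ∑ s, ∑ b, O s b * q (s, b) s' := by
  calc ∑ b, O s' b
      = ∑' t : ℕ, γ ^ t * ∑ b, F t s' b := by
        simp only [hO]
        rw [← Summable.tsum_finsetSum (fun b _ => ENNReal.summable)]
        exact tsum_congr fun t => (Finset.mul_sum _ _ _).symm
    _ = q0 s' + ∑' t : ℕ, γ ^ (t+1) * ∑ b, F (t+1) s' b := by
        rw [tsum_eq_zero_add' (f := fun t => γ ^ t * ∑ b, F t s' b) ENNReal.summable]
        simp only [pow_zero, one_mul, h0]
    _ = q0 s' + γ * ∑' t : ℕ, γ ^ t * ∑ s, ∑ b, F t s b * q (s, b) s' := by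
        rw [← ENNReal.tsum_mul_left]
        congr 1
        refine tsum_congr fun t => ?_
        rw [hsucc, pow_succ]
        ring
    _ = q0 s' + γ * ∑ s, ∑ b, O s b * q (s, b) s' := by
        congr 2
        calc ∑' t : ℕ, γ ^ t * ∑ s, ∑ b, F t s b * q (s, b) s'
            = ∑' t : ℕ, ∑ s, ∑ b, γ ^ t * F t s b * q (s, b) s' := by
              refine tsum_congr fun t => ?_
              rw [Finset.mul_sum]
              exact Finset.sum_congr rfl fun s _ => by
                rw [Finset.mul_sum]
                exact Finset.sum_congr rfl fun b _ => (mul_assoc _ _ _).symm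
          _ = ∑ s, ∑ b, ∑' t : ℕ, γ ^ t * F t s b * q (s, b) s' := by
              rw [Summable.tsum_finsetSum (fun s _ => ENNReal.summable)]
              exact Finset.sum_congr rfl fun s _ => Summable.tsum_finsetSum (fun b _ => ENNReal.summable)
          _ = ∑ s, ∑ b, O s b * q (s, b) s' :=
              Finset.sum_congr rfl fun s _ => Finset.sum_congr rfl fun b _ => by
                rw [ENNReal.tsum_mul_right, hO]

include hπ in
lemma occ_conserve (γ : ℝ≥0∞) (s' : S) :
    (∑ b, occ γ p0 p π s' b)
      = p0 s' + γ * ∑ s, ∑ b, occ γ p0 p π s b * p (s, b) s' :=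
  conserve_abstract p0 p γ (fpath p0 p π) (occ γ p0 p π)
    (fun _ _ => rfl) (sum_fpath_zero p0 p π hπ) (fun t => sum_fpath_succ p0 p π hπ t) s'

lemma occ_mul (γ : ℝ≥0∞) (tπ : S → A → ℝ≥0∞)
    (htπ : ∀ s a, (∑ b, occ γ p0 p π s b) ≠ 0 →
      tπ s a = occ γ p0 p π s a / (∑ b, occ γ p0 p π s b))
    (htπ1 : ∀ s, ∑ a, tπ s a = 1)
    (Ptπ : S → S → ℝ≥0∞) (hPtπ : ∀ s s', Ptπ s s' = ∑ a, tπ s a * p (s, a) s')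
    (s s' : S) :
    ∑ b, occ γ p0 p π s b * p (s, b) s' = (∑ b, occ γ p0 p π s b) * Ptπ s s' := by
  by_cases h0 : (∑ b, occ γ p0 p π s b) = 0
  · have hz : ∀ b, occ γ p0 p π s b = 0 := by
      intro b
      exact Finset.sum_eq_zero_iff.mp h0 b (Finset.mem_univ b)
    rw [h0, zero_mul]
    exact Finset.sum_eq_zero fun b _ => by rw [hz b, zero_mul]
  · have hfin : (∑ b, occ γ p0 p π s b) ≠ ⊤ := by
      intro htop
      have hz : ∀ a, tπ s a = 0 := fun a => by
        rw [htπ s a h0, htop, ENNReal.div_top]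
      have h1 := htπ1 s
      rw [Finset.sum_eq_zero (fun a _ => hz a)] at h1
      exact one_ne_zero h1.symm
    have key : ∀ b, occ γ p0 p π s b = (∑ b, occ γ p0 p π s b) * tπ s b := by
      intro b
      rw [htπ s b h0, mul_comm]
      exact (ENNReal.div_mul_cancel h0 hfin).symm
    rw [hPtπ, Finset.mul_sum]
    exact Finset.sum_congr rfl fun b _ => by rw [key b, mul_assoc]

lemma expansion_abstract (γ : ℝ≥0∞) (q0 : S → ℝ≥0∞) (P : S → S → ℝ≥0∞)
    (μ : S → ℝ≥0∞) (hcons : ∀ s', μ s' = q0 s' + γ * ∑ s, μ s * P s s')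
    (σ : Finset S) :
    ∀ t : ℕ, (∑ s ∈ σ, μ s) =
        (∑ k ∈ Finset.range (t + 1), γ ^ k * ∑ s, q0 s * ∑ s' ∈ σ, kpow P k s s') +
        γ ^ (t + 1) * ∑ s, μ s * ∑ s' ∈ σ, kpow P (t + 1) s s' := by
  have e1 : ∀ s s', kpow P 1 s s' = P s s' := by
    intro s s'; simp [kpow]
  have ekey : ∀ (k : ℕ) (u : S),
      ∑ s, P u s * ∑ s' ∈ σ, kpow P k s s' = ∑ s' ∈ σ, kpow P (k+1) u s' := by
    intro k u
    calc ∑ s, P u s * ∑ s' ∈ σ, kpow P k s s'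
        = ∑ s, ∑ s' ∈ σ, P u s * kpow P k s s' :=
          Finset.sum_congr rfl fun s _ => Finset.mul_sum _ _ _
      _ = ∑ s' ∈ σ, ∑ s, P u s * kpow P k s s' := Finset.sum_comm
      _ = ∑ s' ∈ σ, kpow P (k+1) u s' := Finset.sum_congr rfl fun s' _ => rfl
  have hq0 : ∀ k : ℕ, ∑ s, μ s * ∑ s' ∈ σ, kpow P (k+1) s s'
      = (∑ s, q0 s * ∑ s' ∈ σ, kpow P (k+1) s s')
        + γ * ∑ s, μ s * ∑ s' ∈ σ, kpow P (k+2) s s' := by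
    intro k
    calc ∑ s, μ s * ∑ s' ∈ σ, kpow P (k+1) s s'
        = ∑ s, (q0 s + γ * ∑ u, μ u * P u s) * ∑ s' ∈ σ, kpow P (k+1) s s' :=
          Finset.sum_congr rfl fun s _ => by rw [← hcons s]
      _ = (∑ s, q0 s * ∑ s' ∈ σ, kpow P (k+1) s s')
          + γ * ∑ s, (∑ u, μ u * P u s) * ∑ s' ∈ σ, kpow P (k+1) s s' := by
          simp only [add_mul, mul_assoc]
          rw [Finset.sum_add_distrib, ← Finset.mul_sum]
      _ = (∑ s, q0 s * ∑ s' ∈ σ, kpow P (k+1) s s')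
          + γ * ∑ s, μ s * ∑ s' ∈ σ, kpow P (k+2) s s' := by
          congr 1
          congr 1
          calc ∑ s, (∑ u, μ u * P u s) * ∑ s' ∈ σ, kpow P (k+1) s s'
              = ∑ s, ∑ u, μ u * P u s * ∑ s' ∈ σ, kpow P (k+1) s s' :=
                Finset.sum_congr rfl fun s _ => Finset.sum_mul _ _ _
            _ = ∑ u, ∑ s, μ u * P u s * ∑ s' ∈ σ, kpow P (k+1) s s' := Finset.sum_comm
            _ = ∑ u, μ u * ∑ s' ∈ σ, kpow P (k+2) u s' := by
                refine Finset.sum_congr rfl fun u _ => ?_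
                rw [← ekey (k+1) u, Finset.mul_sum]
                exact Finset.sum_congr rfl fun s _ => mul_assoc _ _ _
  intro t
  induction t with
  | zero =>
    have e0 : ∀ s : S, (∑ s' ∈ σ, kpow P 0 s s') = if s ∈ σ then 1 else 0 := by
      intro s
      simp [kpow, Finset.sum_ite_eq]
    simp only [Finset.range_one, Finset.sum_singleton, pow_zero, one_mul, pow_one, zero_add]
    rw [Finset.sum_congr rfl (fun s (_ : s ∈ σ) => hcons s), Finset.sum_add_distrib]
    congr 1
    · have h : ∑ s, q0 s * ∑ s' ∈ σ, kpow P 0 s s' = ∑ s ∈ σ, q0 s := by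
        simp only [e0, mul_ite, mul_one, mul_zero]
        simp [Finset.sum_ite_mem]
      rw [h]
    · rw [← Finset.mul_sum, Finset.sum_comm]
      congr 1
      refine Finset.sum_congr rfl fun u _ => ?_
      rw [← Finset.mul_sum]
      congr 1
      exact Finset.sum_congr rfl fun s _ => by rw [e1]
  | succ t ih =>
    rw [ih, hq0 t]
    conv_rhs => rw [Finset.sum_range_succ]
    ring
end Aux

/-- Recursive expansion: for any measurable set `σ` of finite occupancy and any
`t`, the state occupancy of `π` expands as the first `t+1` terms of the
occupancy of its Markovian projection `π̃` plus a remainder term through the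
`(t+1)`-fold transition kernel `p^{π̃}`. -/
theorem recursive_expansion {S A : Type*}
    [Fintype S] [Fintype A] [DecidableEq S] [DecidableEq A]
    (γ : ℝ≥0∞) (hγ : γ ≤ 1)
    (p0 : S → ℝ≥0∞) (hp0 : ∑ s, p0 s = 1)
    (p : S × A → S → ℝ≥0∞) (hp : ∀ x, ∑ s', p x s' = 1)
    (π : (t : ℕ) → (Fin t → S × A) → S → A → ℝ≥0∞)
    (hπ : ∀ t h s, ∑ a, π t h s a = 1)
    (tπ : S → A → ℝ≥0∞)
    (htπ : ∀ s a, (∑ b, occ γ p0 p π s b) ≠ 0 →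
      tπ s a = occ γ p0 p π s a / (∑ b, occ γ p0 p π s b))
    (htπ1 : ∀ s, ∑ a, tπ s a = 1)
    (Ptπ : S → S → ℝ≥0∞)
    (hPtπ : ∀ s s', Ptπ s s' = ∑ a, tπ s a * p (s, a) s')
    (σ : Finset S) (hσ : (∑ s ∈ σ, ∑ b, occ γ p0 p π s b) ≠ ⊤) :
    ∀ t : ℕ,
      (∑ s ∈ σ, ∑ b, occ γ p0 p π s b) =
        (∑ k ∈ Finset.range (t + 1), γ ^ k *
          ∑ s, p0 s * ∑ s' ∈ σ, kpow Ptπ k s s') +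
        γ ^ (t + 1) * ∑ s, (∑ b, occ γ p0 p π s b) *
          ∑ s' ∈ σ, kpow Ptπ (t + 1) s s' := by
  have hcons : ∀ s', (fun u => ∑ b, occ γ p0 p π u b) s'
      = p0 s' + γ * ∑ s, (fun u => ∑ b, occ γ p0 p π u b) s * Ptπ s s' := by
    intro s'
    simp only
    rw [occ_conserve p0 p π hπ γ s']
    rw [Finset.sum_congr rfl fun s _ => occ_mul p0 p π γ tπ htπ htπ1 Ptπ hPtπ s s']
  intro t
  exact expansion_abstract γ p0 Ptπ (fun u => ∑ b, occ γ p0 p π u b) hcons σ t
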